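/- arXiv:2503.00158 — 2 statements merged into one kernel-verified Lean document; each statement's English description precedes it below -/
import Mathlib

section
/- Let E be a real inner product space, let σ, u ∈ E, and let ξ ∈ ℝ with 0 < ξ and ‖σ‖ ≤ ξ. Then ⟪σ, u⟫ + ξ‖u‖ = 0 if and only if either u = 0, or ‖σ‖ = ξ and there exists κ > 0 such that u = -κ • σ. -/
open scoped RealInnerProductSpace

/-!
By Cauchy–Schwarz, `-⟪σ, u⟫ ≤ ‖σ‖ * ‖u‖ ≤ ξ * ‖u‖`, so `⟪σ, u⟫ + ξ * ‖u‖ = 0` with `u ≠ 0` forces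
both inequalities to be equalities: `‖σ‖ = ξ`, and equality in Cauchy–Schwarz puts `-u` on the ray
of `σ`, i.e. `u = -κ • σ` with `κ > 0`.
-/

section SameRay

variable {R M : Type*} [Field R] [LinearOrder R] [IsStrictOrderedRing R]
  [AddCommGroup M] [Module R M]

theorem sameRay_neg_right_iff_of_ne_zero {x y : M} (hx : x ≠ 0) :
    SameRay R x (-y) ↔ y = 0 ∨ ∃ κ : R, 0 < κ ∧ y = -κ • x := by
  rw [← exists_nonneg_left_iff_sameRay hx]
  constructor
  · rintro ⟨r, hr, hry⟩
    rcases hr.eq_or_lt with rfl | hr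
    · exact Or.inl (by simpa [eq_comm] using hry)
    · exact Or.inr ⟨r, hr, by rw [neg_smul, hry, neg_neg]⟩
  · rintro (rfl | ⟨κ, hκ, rfl⟩)
    · exact ⟨0, le_rfl, by simp⟩
    · exact ⟨κ, hκ.le, by rw [neg_smul, neg_neg]⟩

end SameRay

section InnerProductSpace

variable {E : Type*} [NormedAddCommGroup E] [InnerProductSpace ℝ E]

theorem inner_add_norm_mul_norm_eq_zero_iff_sameRay {x y : E} :
    ⟪x, y⟫ + ‖x‖ * ‖y‖ = 0 ↔ SameRay ℝ x (-y) := by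
  rw [sameRay_iff_norm_smul_eq, eq_comm (a := ‖x‖ • -y), ← inner_eq_norm_mul_iff_real,
    inner_neg_right, norm_neg]
  constructor <;> intro h <;> linarith

theorem norm_eq_of_inner_add_mul_norm_eq_zero {x y : E} {ξ : ℝ} (hx : ‖x‖ ≤ ξ) (hy : y ≠ 0)
    (h : ⟪x, y⟫ + ξ * ‖y‖ = 0) : ‖x‖ = ξ := by
  have hcs : -⟪x, y⟫ ≤ ‖x‖ * ‖y‖ := by
    simpa [inner_neg_right] using real_inner_le_norm x (-y)
  have hy_pos : 0 < ‖y‖ := norm_pos_iff.mpr hy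
  nlinarith

end InnerProductSpace

/-- Pointwise Tresca friction equivalence (Proposition 2.1). -/
theorem tresca_iff {E : Type*} [NormedAddCommGroup E] [InnerProductSpace ℝ E]
    (σ u : E) (ξ : ℝ) (hξ : 0 < ξ) (hσ : ‖σ‖ ≤ ξ) :
    ⟪σ, u⟫ + ξ * ‖u‖ = 0 ↔
      (u = 0 ∨ (‖σ‖ = ξ ∧ ∃ κ : ℝ, 0 < κ ∧ u = -κ • σ)) := by
  constructor
  · intro h
    by_cases hu : u = 0
    · exact Or.inl hu
    have hσξ : ‖σ‖ = ξ := norm_eq_of_inner_add_mul_norm_eq_zero hσ hu h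
    have hσ0 : σ ≠ 0 := norm_pos_iff.mp (hσξ ▸ hξ)
    have hray : SameRay ℝ σ (-u) :=
      inner_add_norm_mul_norm_eq_zero_iff_sameRay.mp (hσξ ▸ h)
    exact Or.inr ⟨hσξ, ((sameRay_neg_right_iff_of_ne_zero hσ0).mp hray).resolve_left hu⟩
  · rintro (rfl | ⟨hσξ, hκ⟩)
    · simp
    · have hσ0 : σ ≠ 0 := norm_pos_iff.mp (hσξ ▸ hξ)
      rw [← hσξ, inner_add_norm_mul_norm_eq_zero_iff_sameRay]
      exact (sameRay_neg_right_iff_of_ne_zero hσ0).mpr (Or.inr hκ)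
end

section
/- Let E be a real Hilbert space, let A : E × E → ℝ be a continuous bilinear form that is coercive with constant α > 0 (i.e. A(v,v) ≥ α‖v‖² for all v ∈ E), let K ⊆ E be a convex set, and let j : E → ℝ be any function. Let L : E → ℝ and, for each n ∈ ℕ, Lₙ : E → ℝ be continuous linear functionals with Lₙ → L in operator norm. If u ∈ K satisfies A(u, v - u) + j(v) - j(u) ≥ L(v - u) for all v ∈ K, and for each n, uₙ ∈ K satisfies A(uₙ, v - uₙ) + j(v) - j(uₙ) ≥ Lₙ(v - uₙ) for all v ∈ K, then uₙ converges strongly to u in E, with ‖uₙ - u‖ ≤ ‖Lₙ - L‖/α for all n. -/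
/-!
Testing the inequality for `u` at `uₙ` and the one for `uₙ` at `u` and adding them cancels `j`
and leaves `A(uₙ - u, uₙ - u) ≤ (Lₙ - L)(uₙ - u)`; coercivity bounds the left side below by
`α‖uₙ - u‖²` and the right side is at most `‖Lₙ - L‖ ‖uₙ - u‖`.
-/

open Filter

section VariationalInequality

variable {E : Type*} [NormedAddCommGroup E] [NormedSpace ℝ E]

theorem norm_le_opNorm_div_of_mul_sq_le {α : ℝ} (hα : 0 < α) {f : E →L[ℝ] ℝ} {x : E}
    (h : α * ‖x‖ ^ 2 ≤ f x) : ‖x‖ ≤ ‖f‖ / α := by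
  have hfx : α * ‖x‖ * ‖x‖ ≤ ‖f‖ * ‖x‖ :=
    calc α * ‖x‖ * ‖x‖ = α * ‖x‖ ^ 2 := by ring
      _ ≤ f x := h
      _ ≤ ‖f‖ * ‖x‖ := (le_abs_self _).trans (f.le_opNorm x)
  rcases (norm_nonneg x).eq_or_lt with hx | hx
  · rw [← hx]
    positivity
  · rw [le_div_iff₀ hα, mul_comm]
    exact le_of_mul_le_mul_right hfx hx

theorem apply_sub_sub_le_of_variational_inequalities {A : E →L[ℝ] E →L[ℝ] ℝ} {K : Set E}
    {j : E → ℝ} {L₁ L₂ : E →L[ℝ] ℝ} {u₁ u₂ : E} (hu₁ : u₁ ∈ K) (hu₂ : u₂ ∈ K)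
    (h₁ : ∀ v ∈ K, A u₁ (v - u₁) + j v - j u₁ ≥ L₁ (v - u₁))
    (h₂ : ∀ v ∈ K, A u₂ (v - u₂) + j v - j u₂ ≥ L₂ (v - u₂)) :
    A (u₁ - u₂) (u₁ - u₂) ≤ (L₁ - L₂) (u₁ - u₂) := by
  have h₁₂ := h₁ u₂ hu₂
  have h₂₁ := h₂ u₁ hu₁
  rw [← neg_sub u₁ u₂] at h₁₂
  simp only [map_neg, map_sub, sub_apply] at h₁₂ h₂₁ ⊢
  linarith

theorem norm_sub_le_of_variational_inequalities {A : E →L[ℝ] E →L[ℝ] ℝ} {α : ℝ} (hα : 0 < α)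
    (hcoer : ∀ v : E, α * ‖v‖ ^ 2 ≤ A v v) {K : Set E} {j : E → ℝ} {L₁ L₂ : E →L[ℝ] ℝ}
    {u₁ u₂ : E} (hu₁ : u₁ ∈ K) (hu₂ : u₂ ∈ K)
    (h₁ : ∀ v ∈ K, A u₁ (v - u₁) + j v - j u₁ ≥ L₁ (v - u₁))
    (h₂ : ∀ v ∈ K, A u₂ (v - u₂) + j v - j u₂ ≥ L₂ (v - u₂)) :
    ‖u₁ - u₂‖ ≤ ‖L₁ - L₂‖ / α :=
  norm_le_opNorm_div_of_mul_sq_le hα <|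
    (hcoer _).trans (apply_sub_sub_le_of_variational_inequalities hu₁ hu₂ h₁ h₂)

end VariationalInequality

theorem vi_convergence_general {E : Type*} [NormedAddCommGroup E] [InnerProductSpace ℝ E]
    (A : E →L[ℝ] E →L[ℝ] ℝ) (α : ℝ) (hα : 0 < α)
    (hcoer : ∀ v : E, α * ‖v‖ ^ 2 ≤ A v v)
    (K : Set E)
    (j : E → ℝ)
    (L : E →L[ℝ] ℝ) (Ln : ℕ → E →L[ℝ] ℝ)
    (hLn : Tendsto Ln atTop (nhds L))
    (u : E) (hu : u ∈ K)
    (hvi : ∀ v ∈ K, A u (v - u) + j v - j u ≥ L (v - u))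
    (un : ℕ → E) (hun : ∀ n, un n ∈ K)
    (hvin : ∀ n, ∀ v ∈ K, A (un n) (v - un n) + j v - j (un n) ≥ Ln n (v - un n)) :
    Tendsto un atTop (nhds u) ∧ ∀ n, ‖un n - u‖ ≤ ‖Ln n - L‖ / α := by
  have hbound (n : ℕ) : ‖un n - u‖ ≤ ‖Ln n - L‖ / α :=
    norm_sub_le_of_variational_inequalities hα hcoer (hun n) hu (hvin n) hvi
  have hbound_lim : Tendsto (fun n => ‖Ln n - L‖ / α) atTop (nhds 0) := by
    simpa using (tendsto_iff_norm_sub_tendsto_zero.mp hLn).div_const α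
  exact ⟨tendsto_iff_norm_sub_tendsto_zero.mpr
    (squeeze_zero (fun _ => norm_nonneg _) hbound hbound_lim), hbound⟩

/-- Strong convergence of solutions of variational inequalities under convergence of the
linear functionals in operator norm. -/
theorem vi_convergence {E : Type*} [NormedAddCommGroup E] [InnerProductSpace ℝ E]
    [CompleteSpace E]
    (A : E →L[ℝ] E →L[ℝ] ℝ) (α : ℝ) (hα : 0 < α)
    (hcoer : ∀ v : E, α * ‖v‖ ^ 2 ≤ A v v)
    (K : Set E) (hK : Convex ℝ K)
    (j : E → ℝ)
    (L : E →L[ℝ] ℝ) (Ln : ℕ → E →L[ℝ] ℝ)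
    (hLn : Tendsto Ln atTop (nhds L))
    (u : E) (hu : u ∈ K)
    (hvi : ∀ v ∈ K, A u (v - u) + j v - j u ≥ L (v - u))
    (un : ℕ → E) (hun : ∀ n, un n ∈ K)
    (hvin : ∀ n, ∀ v ∈ K, A (un n) (v - un n) + j v - j (un n) ≥ Ln n (v - un n)) :
    Tendsto un atTop (nhds u) ∧ ∀ n, ‖un n - u‖ ≤ ‖Ln n - L‖ / α :=
  vi_convergence_general A α hα hcoer K j L Ln hLn u hu hvi un hun hvin
end
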